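/- Let 𝒜 generate a monoid of Northcott type with exponents u_{ij} > 0. Then min Δ(ℕ𝒜) = gcd(d_1,…,d_{n-1},d_n) and max Δ(ℕ𝒜) = max(d_1,…,d_{n-1},d_n), where d_i = |u_{ni}+u_{σ(i),i} − (u_{i,σ^{-1}(i)} + u_{in})| for i = 1,…,n−1 (σ the cycle (1 2 ⋯ n−1)) and d_n = |∑_{i=1}^{n-1}u_{in} − ∑_{i=1}^{n-1}u_{ni}|, i.e., the d's are the absolute differences of the lengths of the two factorizations of each Betti element. -/

import Mathlib

/-- `σ` : the cycle `(1 2 ⋯ n−1)` in 0-based indexing on `{0,…,n-2}`. -/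
def ntSig (n i : ℕ) : ℕ := if i = n - 2 then 0 else i + 1

/-- `σ⁻¹` in 0-based indexing on `{0,…,n-2}`. -/
def ntTau (n i : ℕ) : ℕ := if i = 0 then n - 2 else i - 1

/-- The factorization homomorphism `(v_1,…,v_n) ↦ ∑ v_i • a_i`. -/
def ntDeg {G : Type*} [AddCommGroup G] (n : ℕ) (a : Fin n → G) : (Fin n → ℕ) →+ G where
  toFun v := ∑ i, v i • a i
  map_zero' := by simp
  map_add' v w := by simp [add_smul, Finset.sum_add_distrib]

/-- The defining relations of a Northcott type monoid: the two factorizations of each Betti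
element, i.e. the two sides of the binomials `f_1,…,f_{n-1}` and `D` (0-based indices). -/
def ntRel (n : ℕ) (hn : 3 ≤ n) (u : ℕ → ℕ → ℕ) (v w : Fin n → ℕ) : Prop :=
  (∃ i : Fin (n - 1),
    v = Pi.single (⟨(i : ℕ), by have := i.isLt; omega⟩ : Fin n)
          (u (n - 1) i + u (ntSig n i) i) ∧
    w = Pi.single (⟨ntTau n i, by have := i.isLt; unfold ntTau; split <;> omega⟩ : Fin n)
          (u i (ntTau n i))
        + Pi.single (⟨n - 1, by omega⟩ : Fin n) (u i (n - 1)))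
  ∨ (v = (fun j : Fin n => if (j : ℕ) < n - 1 then u (n - 1) j else 0) ∧
      w = Pi.single (⟨n - 1, by omega⟩ : Fin n) (∑ i : Fin (n - 1), u (i : ℕ) (n - 1)))

/-- Positivity of the relevant exponents `u_{ij} > 0`. -/
def ntPos (n : ℕ) (u : ℕ → ℕ → ℕ) : Prop :=
  ∀ i, i < n - 1 → 0 < u (n - 1) i ∧ 0 < u i (n - 1) ∧ 0 < u i (ntTau n i) ∧ 0 < u (ntSig n i) i

/-- The distance between two factorizations. -/
def ntDist {n : ℕ} (v w : Fin n → ℕ) : ℕ :=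
  max (∑ i, (v i - min (v i) (w i))) (∑ i, (w i - min (v i) (w i)))

/-- The set of lengths of factorizations of `s`. -/
def ntLengths {G : Type*} [AddCommGroup G] (n : ℕ) (a : Fin n → G) (s : G) : Set ℕ :=
  {l : ℕ | ∃ v : Fin n → ℕ, ntDeg n a v = s ∧ l = ∑ i, v i}

/-- The Delta set of an element: gaps between consecutive lengths of factorizations. -/
def ntDelta {G : Type*} [AddCommGroup G] (n : ℕ) (a : Fin n → G) (s : G) : Set ℕ :=
  {d : ℕ | ∃ l ∈ ntLengths n a s, ∃ l' ∈ ntLengths n a s, l < l' ∧ d = l' - l ∧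
    ∀ m ∈ ntLengths n a s, ¬ (l < m ∧ m < l')}

/-- The absolute difference of the lengths of the two factorizations of the `i`-th Betti
element, `|u_{ni}+u_{σ(i),i} − (u_{i,σ⁻¹(i)}+u_{in})|`. -/
def ntd (n : ℕ) (u : ℕ → ℕ → ℕ) (i : Fin (n - 1)) : ℕ :=
  (((u (n - 1) i + u (ntSig n i) i : ℕ) : ℤ)
    - ((u i (ntTau n i) + u i (n - 1) : ℕ) : ℤ)).natAbs

/-- `|∑ u_{in} − ∑ u_{ni}|`, the length difference for the Betti element of `D`. -/
def ntdn (n : ℕ) (u : ℕ → ℕ → ℕ) : ℕ :=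
  (((∑ i : Fin (n - 1), u (i : ℕ) (n - 1) : ℕ) : ℤ)
    - ((∑ i : Fin (n - 1), u (n - 1) i : ℕ) : ℤ)).natAbs

/-!
Two factorizations of the same element are joined by a chain of elementary moves, each replacing
one side of a defining relation by the other inside a larger factorization; a move changes the
length by `±d` for one of the `d`'s. Hence all length differences at one element are multiples of
`g = gcd(d_1,…,d_n)`, while the length differences of pairs of factorizations of equal elements form
a subgroup of `ℤ` containing every `d`, so `g` itself occurs, necessarily between consecutive
lengths. Along a chain the length jumps by at most `M = max(d_1,…,d_n)`, so consecutive lengths are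
at most `M` apart. Conversely, by positivity of the `u_{ij}` no side of a defining relation lies
below another one, so a Betti element has only its two factorizations and its `d` is a gap.
-/

open Relation

section ElementaryMove

variable {α : Type*} {R : α → α → Prop}

def ElementaryMove [Add α] (R : α → α → Prop) (x y : α) : Prop :=
  ∃ t p q, (R p q ∨ R q p) ∧ x = t + p ∧ y = t + q

lemma ElementaryMove.symm [Add α] {x y : α} (h : ElementaryMove R x y) : ElementaryMove R y x :=
  let ⟨t, p, q, hpq, hx, hy⟩ := h
  ⟨t, q, p, hpq.symm, hy, hx⟩

instance [Add α] : Std.Symm (ElementaryMove R) := ⟨fun _ _ h => h.symm⟩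

lemma ElementaryMove.add_left [AddSemigroup α] (c : α) {x y : α} (h : ElementaryMove R x y) :
    ElementaryMove R (c + x) (c + y) :=
  let ⟨t, p, q, hpq, hx, hy⟩ := h
  ⟨c + t, p, q, hpq, by rw [hx, add_assoc], by rw [hy, add_assoc]⟩

variable [AddCommMonoid α]

lemma reflTransGen_elementaryMove_add {x y z w : α} (h : ReflTransGen (ElementaryMove R) x y)
    (h' : ReflTransGen (ElementaryMove R) z w) :
    ReflTransGen (ElementaryMove R) (x + z) (y + w) := by
  have h₁ : ReflTransGen (ElementaryMove R) (x + z) (y + z) := by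
    simpa only [add_comm _ z] using
      ReflTransGen.lift (z + ·) (fun _ _ hab => ElementaryMove.add_left z hab) _ _ h
  exact h₁.trans (ReflTransGen.lift (y + ·) (fun _ _ hab => ElementaryMove.add_left y hab) _ _ h')

variable (R) in
def elementaryMoveCon : AddCon α where
  r := ReflTransGen (ElementaryMove R)
  iseqv := ⟨fun _ => .refl, Std.Symm.symm _ _, .trans⟩
  add' := reflTransGen_elementaryMove_add

theorem addConGen_iff_reflTransGen {x y : α} :
    addConGen R x y ↔ ReflTransGen (ElementaryMove R) x y := by
  refine ⟨fun h => (AddCon.addConGen_le (c := elementaryMoveCon R)).2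
    (fun p q hpq => .single ⟨0, p, q, .inl hpq, (zero_add p).symm, (zero_add q).symm⟩) h,
    fun h => ?_⟩
  induction h with
  | refl => exact (addConGen R).refl x
  | tail _ hstep ih =>
    obtain ⟨t, p, q, hpq, rfl, rfl⟩ := hstep
    refine (addConGen R).trans ih ((addConGen R).add ((addConGen R).refl t) ?_)
    exact hpq.elim (AddConGen.Rel.of _ _) fun h => (addConGen R).symm (AddConGen.Rel.of _ _ h)

end ElementaryMove

section IsolatedSide

variable {α : Type*} {R : α → α → Prop} {x y z : α}

def IsIsolatedSide [LE α] (R : α → α → Prop) (x y : α) : Prop :=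
  ∀ p q, R p q ∨ R q p → p ≤ x → p = x ∧ q = y

variable [AddMonoid α] [LE α] [CanonicallyOrderedAdd α] [IsRightCancelAdd α]

lemma IsIsolatedSide.eq_of_elementaryMove (hx : IsIsolatedSide R x y)
    (h : ElementaryMove R x z) : z = y := by
  obtain ⟨t, p, q, hpq, rfl, rfl⟩ := h
  obtain ⟨hp, rfl⟩ := hx p q hpq le_add_self
  rw [add_eq_right.1 hp.symm, zero_add]

lemma IsIsolatedSide.eq_or_eq_of_reflTransGen (hx : IsIsolatedSide R x y)
    (hy : IsIsolatedSide R y x) (h : ReflTransGen (ElementaryMove R) x z) : z = x ∨ z = y := by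
  induction h with
  | refl => exact .inl rfl
  | tail _ hstep ih =>
    rcases ih with rfl | rfl
    · exact .inr (hx.eq_of_elementaryMove hstep)
    · exact .inl (hy.eq_of_elementaryMove hstep)

end IsolatedSide

theorem Relation.ReflTransGen.exists_between_of_le_add {α : Type*} {r : α → α → Prop}
    {f : α → ℕ} {M l l' : ℕ} {x y : α} (hr : ∀ a b, r a b → f b ≤ f a + M)
    (h : ReflTransGen r x y) (hx : f x ≤ l) (hy : l' ≤ f y) (hM : l + M < l') :
    ∃ z, ReflTransGen r x z ∧ l < f z ∧ f z < l' := by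
  induction h with
  | refl => omega
  | @tail b c hxb hbc ih =>
    by_cases hb : l' ≤ f b
    · exact ih hb
    · have := hr b c hbc
      exact ⟨b, hxb, by omega, by omega⟩

theorem Int.natCast_mem_of_forall_dvd {T : AddSubgroup ℤ} {g : ℕ}
    (h : ∀ b : ℕ, (∀ e ∈ T, (b : ℤ) ∣ e) → b ∣ g) : (g : ℤ) ∈ T := by
  obtain ⟨c, rfl⟩ := Int.subgroup_cyclic T
  simp only [← AddSubgroup.zmultiples_eq_closure, Int.mem_zmultiples_iff] at h ⊢
  exact Int.dvd_natCast.2 (h c.natAbs fun e he => Int.natAbs_dvd.2 he)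

section LenDiff

variable {ι : Type*} [Fintype ι]

def lenDiff (v w : ι → ℕ) : ℤ := ((∑ k, w k : ℕ) : ℤ) - ((∑ k, v k : ℕ) : ℤ)

lemma lenDiff_add (v w v' w' : ι → ℕ) :
    lenDiff (v + v') (w + w') = lenDiff v w + lenDiff v' w' := by
  simp only [lenDiff, Pi.add_apply, Finset.sum_add_distrib]
  push_cast
  ring

lemma lenDiff_add_left (t v w : ι → ℕ) : lenDiff (t + v) (t + w) = lenDiff v w := by
  rw [lenDiff_add, lenDiff, sub_self, zero_add]

lemma lenDiff_swap (v w : ι → ℕ) : lenDiff w v = -lenDiff v w := by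
  simp only [lenDiff, neg_sub]

lemma lenDiff_add_lenDiff (u v w : ι → ℕ) : lenDiff u v + lenDiff v w = lenDiff u w := by
  simp only [lenDiff]
  ring

variable {R : (ι → ℕ) → (ι → ℕ) → Prop}

lemma ElementaryMove.exists_natAbs_lenDiff_eq {x y : ι → ℕ} (h : ElementaryMove R x y) :
    ∃ p q, R p q ∧ (lenDiff x y).natAbs = (lenDiff p q).natAbs := by
  obtain ⟨t, p, q, hpq | hqp, rfl, rfl⟩ := h
  · exact ⟨p, q, hpq, by rw [lenDiff_add_left]⟩
  · exact ⟨q, p, hqp, by rw [lenDiff_add_left, lenDiff_swap, Int.natAbs_neg]⟩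

lemma Relation.ReflTransGen.dvd_lenDiff {b : ℕ} (hR : ∀ p q, R p q → b ∣ (lenDiff p q).natAbs)
    {v w : ι → ℕ} (h : ReflTransGen (ElementaryMove R) v w) : (b : ℤ) ∣ lenDiff v w := by
  induction h with
  | refl => simp [lenDiff]
  | tail _ hstep ih =>
    obtain ⟨p, q, hpq, heq⟩ := hstep.exists_natAbs_lenDiff_eq
    rw [← lenDiff_add_lenDiff]
    exact dvd_add ih (Int.natCast_dvd.2 (heq ▸ hR p q hpq))

end LenDiff

section Delta

variable {G : Type*} [AddCommGroup G] {n : ℕ} {a : Fin n → G}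
  {R : (Fin n → ℕ) → (Fin n → ℕ) → Prop}

lemma ntDeg_eq_iff (hker : AddCon.ker (ntDeg n a) = addConGen R) {v w : Fin n → ℕ} :
    ntDeg n a v = ntDeg n a w ↔ ReflTransGen (ElementaryMove R) v w := by
  rw [← AddCon.ker_rel, hker, addConGen_iff_reflTransGen]

lemma ntDeg_eq_of_rel (hker : AddCon.ker (ntDeg n a) = addConGen R) {p q : Fin n → ℕ}
    (h : R p q) : ntDeg n a p = ntDeg n a q := by
  rw [← AddCon.ker_rel, hker]
  exact AddConGen.Rel.of _ _ h

variable (n a) in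
def lenDiffSubgroup : AddSubgroup ℤ where
  carrier := {e | ∃ v w, ntDeg n a v = ntDeg n a w ∧ lenDiff v w = e}
  zero_mem' := ⟨0, 0, rfl, by simp [lenDiff]⟩
  add_mem' := by
    rintro _ _ ⟨v, w, h, rfl⟩ ⟨v', w', h', rfl⟩
    exact ⟨v + v', w + w', by rw [map_add, map_add, h, h'], lenDiff_add ..⟩
  neg_mem' := by
    rintro _ ⟨v, w, h, rfl⟩
    exact ⟨w, v, h.symm, lenDiff_swap ..⟩

theorem isLeast_ntDelta (hker : AddCon.ker (ntDeg n a) = addConGen R) {g : ℕ}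
    (hg : ∀ b : ℕ, b ∣ g ↔ ∀ p q, R p q → b ∣ (lenDiff p q).natAbs) (hg0 : 0 < g) :
    IsLeast {d | ∃ s, d ∈ ntDelta n a s} g := by
  have hdvd {v w : Fin n → ℕ} (h : ntDeg n a v = ntDeg n a w) : (g : ℤ) ∣ lenDiff v w :=
    ((ntDeg_eq_iff hker).1 h).dvd_lenDiff ((hg g).1 dvd_rfl)
  refine ⟨?_, ?_⟩
  · obtain ⟨v, w, hvw, hgvw⟩ : (g : ℤ) ∈ lenDiffSubgroup n a :=
      Int.natCast_mem_of_forall_dvd fun b hb => (hg b).2 fun p q hpq =>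
        Int.natCast_dvd.1 (hb _ ⟨p, q, ntDeg_eq_of_rel hker hpq, rfl⟩)
    refine ⟨ntDeg n a v, _, ⟨v, rfl, rfl⟩, _, ⟨w, hvw.symm, rfl⟩, ?_, ?_, ?_⟩
    · simp only [lenDiff] at hgvw; omega
    · simp only [lenDiff] at hgvw; omega
    · rintro _ ⟨x, hx, rfl⟩ ⟨hvx, hxw⟩
      have := Int.le_of_dvd (by simp only [lenDiff]; omega) (hdvd hx.symm)
      simp only [lenDiff] at this hgvw
      omega
  · rintro _ ⟨s, _, ⟨v, hv, rfl⟩, _, ⟨w, hw, rfl⟩, hlt, rfl, -⟩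
    have := Int.le_of_dvd (by simp only [lenDiff]; omega) (hdvd (hv.trans hw.symm))
    simp only [lenDiff] at this
    omega

theorem le_of_mem_ntDelta (hker : AddCon.ker (ntDeg n a) = addConGen R) {M : ℕ}
    (hM : ∀ p q, R p q → (lenDiff p q).natAbs ≤ M) {s : G} {d : ℕ} (hd : d ∈ ntDelta n a s) :
    d ≤ M := by
  obtain ⟨_, ⟨v, hv, rfl⟩, _, ⟨w, hw, rfl⟩, hlt, rfl, hgap⟩ := hd
  by_contra! hlarge
  have hstep (x y : Fin n → ℕ) (hxy : ElementaryMove R x y) : ∑ k, y k ≤ ∑ k, x k + M := by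
    obtain ⟨p, q, hpq, heq⟩ := hxy.exists_natAbs_lenDiff_eq
    have := hM p q hpq
    simp only [lenDiff] at heq this
    omega
  obtain ⟨z, hz, hvz, hzw⟩ := ((ntDeg_eq_iff hker).1 (hv.trans hw.symm)).exists_between_of_le_add
    (f := fun x => ∑ k, x k) hstep le_rfl le_rfl (by omega)
  exact hgap _ ⟨z, ((ntDeg_eq_iff hker).2 hz).symm.trans hv, rfl⟩ ⟨hvz, hzw⟩

theorem natAbs_lenDiff_mem_ntDelta (hker : AddCon.ker (ntDeg n a) = addConGen R)
    {p q : Fin n → ℕ} (hpq : R p q) (hne : lenDiff p q ≠ 0)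
    (hcl : ∀ z, ReflTransGen (ElementaryMove R) p z → z = p ∨ z = q) :
    (lenDiff p q).natAbs ∈ ntDelta n a (ntDeg n a p) := by
  have hL : ∀ m ∈ ntLengths n a (ntDeg n a p), m = ∑ k, p k ∨ m = ∑ k, q k := by
    rintro _ ⟨z, hz, rfl⟩
    rcases hcl z ((ntDeg_eq_iff hker).1 hz.symm) with rfl | rfl <;> simp
  have hp : ∑ k, p k ∈ ntLengths n a (ntDeg n a p) := ⟨p, rfl, rfl⟩
  have hq : ∑ k, q k ∈ ntLengths n a (ntDeg n a p) := ⟨q, (ntDeg_eq_of_rel hker hpq).symm, rfl⟩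
  simp only [lenDiff] at hne ⊢
  rcases lt_or_gt_of_ne (fun h => hne (by rw [h, sub_self]) : ∑ k, p k ≠ ∑ k, q k) with h | h
  · exact ⟨_, hp, _, hq, h, by omega, fun m hm hb => by rcases hL m hm with rfl | rfl <;> omega⟩
  · exact ⟨_, hq, _, hp, h, by omega, fun m hm hb => by rcases hL m hm with rfl | rfl <;> omega⟩

theorem isGreatest_ntDelta (hker : AddCon.ker (ntDeg n a) = addConGen R) {M : ℕ}
    (hM : ∀ p q, R p q → (lenDiff p q).natAbs ≤ M) {p q : Fin n → ℕ} (hpq : R p q)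
    (hpqM : (lenDiff p q).natAbs = M) (hM0 : 0 < M)
    (hcl : ∀ z, ReflTransGen (ElementaryMove R) p z → z = p ∨ z = q) :
    IsGreatest {d | ∃ s, d ∈ ntDelta n a s} M :=
  ⟨⟨ntDeg n a p, hpqM ▸ natAbs_lenDiff_mem_ntDelta hker hpq (by omega) hcl⟩,
    fun _ ⟨_, hd⟩ => le_of_mem_ntDelta hker hM hd⟩

end Delta

section Northcott

variable (n : ℕ) (u : ℕ → ℕ → ℕ)

lemma ntTau_lt {i : ℕ} (hi : i < n - 1) : ntTau n i < n - 1 := by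
  unfold ntTau; split <;> omega

lemma ntSig_ntTau {i : ℕ} (hi : i < n - 1) : ntSig n (ntTau n i) = i := by
  unfold ntTau ntSig; split <;> split <;> omega

lemma ntTau_inj {i j : ℕ} (hi : i < n - 1) (hj : j < n - 1) (h : ntTau n i = ntTau n j) :
    i = j := by
  unfold ntTau at h; split at h <;> split at h <;> omega

-- The two sides of the binomial `f_i` are `ntP i` and `ntQ i`, those of `D` are `ntPD` and `ntQD`.
def ntP (i : Fin (n - 1)) : Fin n → ℕ :=
  Pi.single (⟨(i : ℕ), by have := i.isLt; omega⟩ : Fin n) (u (n - 1) i + u (ntSig n i) i)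

def ntQ (i : Fin (n - 1)) : Fin n → ℕ :=
  Pi.single (⟨ntTau n i, by have := ntTau_lt n i.isLt; omega⟩ : Fin n) (u i (ntTau n i))
    + Pi.single (⟨n - 1, by have := i.isLt; omega⟩ : Fin n) (u i (n - 1))

def ntPD : Fin n → ℕ := fun j : Fin n => if (j : ℕ) < n - 1 then u (n - 1) j else 0

def ntQD (hn : 3 ≤ n) : Fin n → ℕ :=
  Pi.single (⟨n - 1, by omega⟩ : Fin n) (∑ i : Fin (n - 1), u (i : ℕ) (n - 1))

lemma ntRel_iff (hn : 3 ≤ n) {v w : Fin n → ℕ} :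
    ntRel n hn u v w ↔
      (∃ i, v = ntP n u i ∧ w = ntQ n u i) ∨ (v = ntPD n u ∧ w = ntQD n u hn) :=
  Iff.rfl

lemma forall_ntRel_iff (hn : 3 ≤ n) {φ : (Fin n → ℕ) → (Fin n → ℕ) → Prop} :
    (∀ p q, ntRel n hn u p q → φ p q) ↔
      (∀ i, φ (ntP n u i) (ntQ n u i)) ∧ φ (ntPD n u) (ntQD n u hn) := by
  simp only [ntRel_iff, or_imp, forall_and, forall_exists_index, and_imp]
  exact and_congr ⟨fun h i => h _ _ i rfl rfl, fun h _ _ i hp hq => hp ▸ hq ▸ h i⟩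
    ⟨fun h => h _ _ rfl rfl, fun h _ _ hp hq => hp ▸ hq ▸ h⟩

lemma ntRel_or_swap_cases (hn : 3 ≤ n) {p q : Fin n → ℕ}
    (h : ntRel n hn u p q ∨ ntRel n hn u q p) :
    (∃ i, p = ntP n u i ∧ q = ntQ n u i) ∨ (∃ i, p = ntQ n u i ∧ q = ntP n u i) ∨
      (p = ntPD n u ∧ q = ntQD n u hn) ∨ (p = ntQD n u hn ∧ q = ntPD n u) := by
  rcases h with (⟨i, rfl, rfl⟩ | ⟨rfl, rfl⟩) | (⟨i, rfl, rfl⟩ | ⟨rfl, rfl⟩)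
  exacts [.inl ⟨i, rfl, rfl⟩, .inr (.inr (.inl ⟨rfl, rfl⟩)), .inr (.inl ⟨i, rfl, rfl⟩),
    .inr (.inr (.inr ⟨rfl, rfl⟩))]

lemma ntP_apply (i : Fin (n - 1)) {k : ℕ} (hk : k < n) :
    ntP n u i ⟨k, hk⟩ = if k = i then u (n - 1) i + u (ntSig n i) i else 0 := by
  simp [ntP, Pi.single_apply, Fin.ext_iff]

lemma ntQ_apply (i : Fin (n - 1)) {k : ℕ} (hk : k < n) :
    ntQ n u i ⟨k, hk⟩ = (if k = ntTau n i then u i (ntTau n i) else 0)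
      + (if k = n - 1 then u i (n - 1) else 0) := by
  simp [ntQ, Pi.single_apply, Fin.ext_iff]

lemma ntPD_apply {k : ℕ} (hk : k < n) :
    ntPD n u ⟨k, hk⟩ = if k < n - 1 then u (n - 1) k else 0 := rfl

lemma ntQD_apply (hn : 3 ≤ n) {k : ℕ} (hk : k < n) :
    ntQD n u hn ⟨k, hk⟩ = if k = n - 1 then ∑ i : Fin (n - 1), u (i : ℕ) (n - 1) else 0 := by
  simp [ntQD, Pi.single_apply, Fin.ext_iff]

lemma sum_ntP (i : Fin (n - 1)) : ∑ k, ntP n u i k = u (n - 1) i + u (ntSig n i) i := by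
  simp [ntP]

lemma sum_ntQ (i : Fin (n - 1)) : ∑ k, ntQ n u i k = u i (ntTau n i) + u i (n - 1) := by
  simp [ntQ, Finset.sum_add_distrib]

lemma sum_ntPD (hn : 3 ≤ n) : ∑ k, ntPD n u k = ∑ i : Fin (n - 1), u (n - 1) (i : ℕ) := by
  obtain ⟨m, rfl⟩ : ∃ m, n = m + 1 := ⟨n - 1, by omega⟩
  simp [ntPD, Fin.sum_univ_castSucc]

lemma sum_ntQD (hn : 3 ≤ n) : ∑ k, ntQD n u hn k = ∑ i : Fin (n - 1), u (i : ℕ) (n - 1) := by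
  simp [ntQD]

lemma natAbs_lenDiff_ntP_ntQ (i : Fin (n - 1)) :
    (lenDiff (ntP n u i) (ntQ n u i)).natAbs = ntd n u i := by
  simp only [lenDiff, sum_ntP, sum_ntQ, ntd]
  omega

lemma natAbs_lenDiff_ntPD_ntQD (hn : 3 ≤ n) :
    (lenDiff (ntPD n u) (ntQD n u hn)).natAbs = ntdn n u := by
  simp only [lenDiff, sum_ntPD n u hn, sum_ntQD, ntdn]

lemma dvd_gcd_ntd_iff (hn : 3 ≤ n) {b : ℕ} :
    b ∣ Nat.gcd (Finset.univ.gcd (ntd n u)) (ntdn n u) ↔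
      ∀ p q, ntRel n hn u p q → b ∣ (lenDiff p q).natAbs := by
  rw [forall_ntRel_iff n u hn (φ := fun p q => b ∣ (lenDiff p q).natAbs), Nat.dvd_gcd_iff,
    Finset.dvd_gcd_iff]
  simp only [natAbs_lenDiff_ntP_ntQ, natAbs_lenDiff_ntPD_ntQD, Finset.mem_univ, true_implies]

lemma natAbs_lenDiff_le_max (hn : 3 ≤ n) :
    ∀ p q, ntRel n hn u p q →
      (lenDiff p q).natAbs ≤ max (Finset.univ.sup (ntd n u)) (ntdn n u) := by
  refine (forall_ntRel_iff n u hn).2 ⟨fun i => ?_, ?_⟩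
  · rw [natAbs_lenDiff_ntP_ntQ]
    exact le_max_of_le_left (Finset.le_sup (Finset.mem_univ i))
  · rw [natAbs_lenDiff_ntPD_ntQD]
    exact le_max_right _ _

end Northcott

section Isolation

variable {n : ℕ} {u : ℕ → ℕ → ℕ}

lemma lt_sum_ntQD (hn : 3 ≤ n) (hu : ntPos n u) (i : Fin (n - 1)) :
    u i (n - 1) < ∑ k : Fin (n - 1), u (k : ℕ) (n - 1) := by
  obtain ⟨j, hj⟩ := Fintype.exists_ne_of_one_lt_card (by simp; omega) i
  exact Finset.single_lt_sum (f := fun k : Fin (n - 1) => u k (n - 1)) hj (Finset.mem_univ i)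
    (Finset.mem_univ j) (hu j j.isLt).2.1 fun _ _ _ => Nat.zero_le _

lemma isIsolatedSide_ntP (hn : 3 ≤ n) (hu : ntPos n u) (i : Fin (n - 1)) :
    IsIsolatedSide (ntRel n hn u) (ntP n u i) (ntQ n u i) := by
  intro p q h hle
  have hi := i.isLt
  rcases ntRel_or_swap_cases n u hn h with ⟨j, rfl, rfl⟩ | ⟨j, rfl, rfl⟩ | ⟨rfl, rfl⟩ | ⟨rfl, rfl⟩
  · obtain rfl : j = i := by
      have := (hu j j.isLt).1
      have hj := hle ⟨j, by omega⟩
      simp only [ntP_apply] at hj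
      ext; split_ifs at hj <;> omega
    exact ⟨rfl, rfl⟩
  · have := (hu j j.isLt).2.1
    exact absurd (hle ⟨n - 1, by omega⟩) (by simp only [ntQ_apply, ntP_apply]; split_ifs <;> omega)
  · obtain ⟨k, hk, hki⟩ : ∃ k, k < n - 1 ∧ k ≠ (i : ℕ) :=
      ⟨if (i : ℕ) = 0 then 1 else 0, by split <;> omega, by split <;> omega⟩
    have := (hu k hk).1
    exact absurd (hle ⟨k, by omega⟩) (by simp only [ntPD_apply, ntP_apply]; split_ifs; omega)
  · have := lt_sum_ntQD hn hu i
    exact absurd (hle ⟨n - 1, by omega⟩) (by simp only [ntQD_apply, ntP_apply]; split_ifs <;> omega)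

lemma isIsolatedSide_ntQ (hn : 3 ≤ n) (hu : ntPos n u) (i : Fin (n - 1)) :
    IsIsolatedSide (ntRel n hn u) (ntQ n u i) (ntP n u i) := by
  intro p q h hle
  have hi := i.isLt
  have hτi := ntTau_lt n hi
  rcases ntRel_or_swap_cases n u hn h with ⟨j, rfl, rfl⟩ | ⟨j, rfl, rfl⟩ | ⟨rfl, rfl⟩ | ⟨rfl, rfl⟩
  · -- at coordinate `τ i`, the side `P_{τ i}` carries `u_{n,τ i} + u_{i,τ i} > u_{i,τ i}`
    have := (hu j j.isLt).1
    have hσ (hj : (j : ℕ) = ntTau n i) : u (ntSig n j) j = u i (ntTau n i) := by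
      rw [hj, ntSig_ntTau n hi]
    exact absurd (hle ⟨j, by omega⟩) (by simp only [ntP_apply, ntQ_apply]; split_ifs <;> omega)
  · have hτj := ntTau_lt n j.isLt
    obtain rfl : j = i := by
      have := (hu j j.isLt).2.2.1
      have hj := hle ⟨ntTau n j, by omega⟩
      simp only [ntQ_apply] at hj
      exact Fin.ext (ntTau_inj n j.isLt hi (by split_ifs at hj <;> omega))
    exact ⟨rfl, rfl⟩
  · obtain ⟨k, hk, hki⟩ : ∃ k, k < n - 1 ∧ k ≠ ntTau n i :=
      ⟨if ntTau n i = 0 then 1 else 0, by split <;> omega, by split <;> omega⟩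
    have := (hu k hk).1
    exact absurd (hle ⟨k, by omega⟩) (by simp only [ntPD_apply, ntQ_apply]; split_ifs <;> omega)
  · have := lt_sum_ntQD hn hu i
    exact absurd (hle ⟨n - 1, by omega⟩) (by simp only [ntQD_apply, ntQ_apply]; split_ifs <;> omega)

lemma isIsolatedSide_ntPD (hn : 3 ≤ n) (hu : ntPos n u) :
    IsIsolatedSide (ntRel n hn u) (ntPD n u) (ntQD n u hn) := by
  intro p q h hle
  rcases ntRel_or_swap_cases n u hn h with ⟨j, rfl, rfl⟩ | ⟨j, rfl, rfl⟩ | ⟨rfl, rfl⟩ | ⟨rfl, rfl⟩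
  · have := (hu j j.isLt).2.2.2
    exact absurd (hle ⟨j, by omega⟩) (by simp only [ntP_apply, ntPD_apply]; split_ifs <;> omega)
  · have := (hu j j.isLt).2.1
    have := ntTau_lt n j.isLt
    exact absurd (hle ⟨n - 1, by omega⟩) (by simp only [ntQ_apply, ntPD_apply]; split_ifs <;> omega)
  · exact ⟨rfl, rfl⟩
  · have := lt_sum_ntQD hn hu ⟨0, by omega⟩
    exact absurd (hle ⟨n - 1, by omega⟩)
      (by simp only [ntQD_apply, ntPD_apply]; split_ifs <;> omega)

lemma isIsolatedSide_ntQD (hn : 3 ≤ n) (hu : ntPos n u) :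
    IsIsolatedSide (ntRel n hn u) (ntQD n u hn) (ntPD n u) := by
  intro p q h hle
  rcases ntRel_or_swap_cases n u hn h with ⟨j, rfl, rfl⟩ | ⟨j, rfl, rfl⟩ | ⟨rfl, rfl⟩ | ⟨rfl, rfl⟩
  · have := (hu j j.isLt).1
    exact absurd (hle ⟨j, by omega⟩) (by simp only [ntP_apply, ntQD_apply]; split_ifs <;> omega)
  · have := (hu j j.isLt).2.2.1
    have := ntTau_lt n j.isLt
    exact absurd (hle ⟨ntTau n j, by omega⟩)
      (by simp only [ntQ_apply, ntQD_apply]; split_ifs <;> omega)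
  · have := (hu 0 (by omega)).1
    exact absurd (hle ⟨0, by omega⟩) (by simp only [ntPD_apply, ntQD_apply]; split_ifs <;> omega)
  · exact ⟨rfl, rfl⟩

lemma exists_ntRel_natAbs_lenDiff_eq_max (hn : 3 ≤ n) (hu : ntPos n u) :
    ∃ p q, ntRel n hn u p q ∧
      (lenDiff p q).natAbs = max (Finset.univ.sup (ntd n u)) (ntdn n u) ∧
      ∀ z, ReflTransGen (ElementaryMove (ntRel n hn u)) p z → z = p ∨ z = q := by
  rcases le_total (Finset.univ.sup (ntd n u)) (ntdn n u) with h | h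
  · refine ⟨ntPD n u, ntQD n u hn, .inr ⟨rfl, rfl⟩,
      by rw [natAbs_lenDiff_ntPD_ntQD, max_eq_right h], fun z hz => ?_⟩
    exact (isIsolatedSide_ntPD hn hu).eq_or_eq_of_reflTransGen (isIsolatedSide_ntQD hn hu) hz
  · obtain ⟨i, -, hi⟩ :=
      Finset.exists_mem_eq_sup Finset.univ ⟨⟨0, by omega⟩, Finset.mem_univ _⟩ (ntd n u)
    refine ⟨ntP n u i, ntQ n u i, .inl ⟨i, rfl, rfl⟩,
      by rw [natAbs_lenDiff_ntP_ntQ, max_eq_left h, hi], fun z hz => ?_⟩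
    exact (isIsolatedSide_ntP hn hu i).eq_or_eq_of_reflTransGen (isIsolatedSide_ntQ hn hu i) hz

end Isolation

/-- for a monoid of Northcott type, `min Δ(ℕ𝒜) = gcd(d_1,…,d_n)` and
`max Δ(ℕ𝒜) = max(d_1,…,d_n)`, where the `d`'s are the absolute differences of the lengths of
the two factorizations of each Betti element (assumed not all zero). -/
theorem northcott_delta_set {G : Type*} [AddCommGroup G] (n : ℕ) (hn : 3 ≤ n)
    (u : ℕ → ℕ → ℕ) (hu : ntPos n u) (a : Fin n → G)
    (hker : AddCon.ker (ntDeg n a) = addConGen (ntRel n hn u))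
    (hnz : (∃ i : Fin (n - 1), ntd n u i ≠ 0) ∨ ntdn n u ≠ 0) :
    IsLeast {d : ℕ | ∃ s : G, d ∈ ntDelta n a s}
        (Nat.gcd (Finset.univ.gcd (ntd n u)) (ntdn n u)) ∧
    IsGreatest {d : ℕ | ∃ s : G, d ∈ ntDelta n a s}
        (max (Finset.univ.sup (ntd n u)) (ntdn n u)) := by
  have hg0 : 0 < Nat.gcd (Finset.univ.gcd (ntd n u)) (ntdn n u) := by
    refine Nat.pos_of_ne_zero fun h => ?_
    rw [Nat.gcd_eq_zero_iff, Finset.gcd_eq_zero_iff] at h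
    rcases hnz with ⟨i, hi⟩ | hD
    exacts [hi (h.1 i (Finset.mem_univ i)), hD h.2]
  have hM0 : 0 < max (Finset.univ.sup (ntd n u)) (ntdn n u) := by
    rcases hnz with ⟨i, hi⟩ | hD
    · exact lt_max_of_lt_left ((Nat.pos_of_ne_zero hi).trans_le (Finset.le_sup (Finset.mem_univ i)))
    · exact lt_max_of_lt_right (Nat.pos_of_ne_zero hD)
  obtain ⟨p, q, hpq, hpqM, hcl⟩ := exists_ntRel_natAbs_lenDiff_eq_max hn hu
  exact ⟨isLeast_ntDelta hker (fun _ => dvd_gcd_ntd_iff n u hn) hg0,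
    isGreatest_ntDelta hker (natAbs_lenDiff_le_max n u hn) hpq hpqM hM0 hcl⟩
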